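/- arXiv:nlin/0604070 — 4 statements merged into one kernel-verified Lean document; each statement's English description precedes it below -/
import Mathlib

section
/- Let n, r be natural numbers with r ≤ n, and let L be the linear differential operator L[f] = Σ_{i=0}^{r} a_i(x)·f^{(i)} with polynomial coefficients a_0, …, a_r ∈ ℝ[x]. If for every polynomial f of degree at most n the polynomial L[f] has degree at most n − r − 1 (in particular L[f] = 0 when r = n), then a_i = 0 for every i; that is, the deficiency of a non-zero linear differential operator relative to P_n cannot exceed its order. -/
open Polynomial

/-- Linear independence of the descending Pochhammer polynomials. -/
lemma aux_descPochhammer_indep :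
    ∀ (d : ℕ) (c : ℕ → ℝ),
      (∑ i ∈ Finset.range (d + 1), Polynomial.C (c i) * descPochhammer ℝ i) = 0 →
      ∀ i ≤ d, c i = 0 := by
  intro d
  induction d with
  | zero =>
    intro c hc i hi
    interval_cases i
    have h0 := congrArg (fun p : ℝ[X] => p.coeff 0) hc
    simpa [descPochhammer_zero] using h0
  | succ d ih =>
    intro c hc i hi
    have htop : c (d + 1) = 0 := by
      have h0 := congrArg (fun p : ℝ[X] => p.coeff (d + 1)) hc
      simp only [finset_sum_coeff, coeff_zero] at h0
      rw [Finset.sum_range_succ] at h0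
      have hzero : ∀ i ∈ Finset.range (d + 1),
          (Polynomial.C (c i) * descPochhammer ℝ i).coeff (d + 1) = 0 := by
        intro i hi'
        have hideg : (Polynomial.C (c i) * descPochhammer ℝ i).natDegree ≤ i := by
          calc (Polynomial.C (c i) * descPochhammer ℝ i).natDegree
              ≤ (Polynomial.C (c i)).natDegree + (descPochhammer ℝ i).natDegree :=
                natDegree_mul_le
            _ ≤ i := by simp [descPochhammer_natDegree]
        exact coeff_eq_zero_of_natDegree_lt
          (lt_of_le_of_lt hideg (by simpa using Finset.mem_range.mp hi'))
      rw [Finset.sum_eq_zero hzero, zero_add] at h0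
      have hmon : (descPochhammer ℝ (d + 1)).coeff (d + 1) = 1 := by
        have := (monic_descPochhammer ℝ (d + 1)).leadingCoeff
        rwa [leadingCoeff, descPochhammer_natDegree] at this
      rw [coeff_C_mul, hmon, mul_one] at h0
      exact h0
    rcases Nat.lt_or_ge i (d + 1) with hlt | hge
    · apply ih c _ i (Nat.lt_succ_iff.mp hlt)
      rw [Finset.sum_range_succ, htop, map_zero, zero_mul, add_zero] at hc
      exact hc
    · have : i = d + 1 := le_antisymm hi hge
      rw [this]; exact htop

/-- If a linear differential operator `L[f] = ∑_{i=0}^r a_i(x) f^{(i)}`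
with polynomial coefficients, where `r ≤ n`, maps every polynomial of degree at most `n`
to a polynomial of degree at most `n - r - 1` (i.e. into `degreeLT ℝ (n - r)`), then all
coefficients `a_i` vanish: the deficiency of a nonzero operator cannot exceed its order. -/
theorem deficiency_le_order (n r : ℕ) (hrn : r ≤ n) (a : ℕ → ℝ[X])
    (h : ∀ f : ℝ[X], f ∈ degreeLE ℝ (n : WithBot ℕ) →
      (∑ i ∈ Finset.range (r + 1), a i * derivative^[i] f) ∈ degreeLT ℝ (n - r)) :
    ∀ i, i ≤ r → a i = 0 := by
  -- Key coefficient identity, obtained by applying `h` to monomials `X ^ k`.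
  have key : ∀ j s k : ℕ, j ≤ r → (s = 0 ∨ j = 0) → n - r + j ≤ k → k ≤ n →
      ∑ i ∈ Finset.range (r + 1), (k.descFactorial i : ℝ) *
        (if j ≤ i then (a i).coeff (i + s - j) else 0) = 0 := by
    intro j s k hjr hjs hk1 hk2
    have hjk : j ≤ k := le_trans (by omega) hk1
    have hXk : (X ^ k : ℝ[X]) ∈ degreeLE ℝ (n : WithBot ℕ) := by
      rw [mem_degreeLE, degree_X_pow]
      exact_mod_cast hk2
    have hP := h (X ^ k) hXk
    rw [mem_degreeLT] at hP
    set m : ℕ := k + s - j with hm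
    have hmn : n - r ≤ m := by omega
    have hcoeff : (∑ i ∈ Finset.range (r + 1), a i * derivative^[i] (X ^ k : ℝ[X])).coeff m
        = 0 := by
      apply coeff_eq_zero_of_degree_lt
      refine lt_of_lt_of_le hP ?_
      exact_mod_cast hmn
    rw [finset_sum_coeff] at hcoeff
    refine Eq.trans (Finset.sum_congr rfl ?_) hcoeff
    intro i hi'
    rw [iterate_derivative_X_pow_eq_smul, mul_smul_comm, coeff_smul, smul_eq_mul,
      coeff_mul_X_pow']
    rcases Nat.lt_or_ge k i with hki | hki
    · -- descFactorial is zero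
      have : k.descFactorial i = 0 := Nat.descFactorial_eq_zero_iff_lt.mpr hki
      simp [this]
    · -- i ≤ k
      congr 1
      have hcond : (j ≤ i) ↔ (k - i ≤ m) := by
        rcases hjs with rfl | rfl <;> omega
      by_cases hji : j ≤ i
      · rw [if_pos hji, if_pos (hcond.mp hji)]
        congr 1
        rcases hjs with rfl | rfl <;> omega
      · have h2 : ¬ k - i ≤ m := fun hh => hji (hcond.mpr hh)
        rw [if_neg hji, if_neg h2]
  -- Main argument
  intro i0 hi0
  apply Polynomial.ext
  intro t
  rw [coeff_zero]
  set j : ℕ := i0 - t with hj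
  set s : ℕ := t - i0 with hs
  have hjs : s = 0 ∨ j = 0 := by omega
  have hji0 : j ≤ i0 := by omega
  have hjr : j ≤ r := le_trans hji0 hi0
  set d : ℕ := r - j with hd
  set c : ℕ → ℝ := fun i' => (a (j + i')).coeff (j + i' + s - j) with hc
  -- the evaluations vanish
  have hz : ∀ z : ℕ, z ≤ d →
      ∑ i' ∈ Finset.range (d + 1), ((n - r + z).descFactorial i' : ℝ) * c i' = 0 := by
    intro z hzd
    have hkey := key j s (n - r + z + j) hjr hjs (by omega) (by omega)
    have hsplit : r + 1 = j + (d + 1) := by omega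
    rw [hsplit, Finset.sum_range_add] at hkey
    have hfirst : ∀ i ∈ Finset.range j,
        ((n - r + z + j).descFactorial i : ℝ) *
          (if j ≤ i then (a i).coeff (i + s - j) else 0) = 0 := by
      intro i hi'
      rw [if_neg (by simpa using Finset.mem_range.mp hi'), mul_zero]
    rw [Finset.sum_eq_zero hfirst, zero_add] at hkey
    have hfact : ∀ i' : ℕ, (n - r + z + j).descFactorial (j + i')
        = (n - r + z).descFactorial i' * (n - r + z + j).descFactorial j := by
      intro i'
      have := Nat.descFactorial_mul_descFactorial (n := n - r + z + j)
        (k := j) (m := j + i') (by omega)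
      rw [← this]
      congr 2 <;> omega
    have hkey2 : ((n - r + z + j).descFactorial j : ℝ) *
        ∑ i' ∈ Finset.range (d + 1), ((n - r + z).descFactorial i' : ℝ) * c i' = 0 := by
      rw [Finset.mul_sum, ← hkey]
      apply Finset.sum_congr rfl
      intro i' _
      rw [hfact i', if_pos (by omega)]
      push_cast
      ring
    have hne : ((n - r + z + j).descFactorial j : ℝ) ≠ 0 := by
      have : (n - r + z + j).descFactorial j ≠ 0 := by
        rw [Ne, Nat.descFactorial_eq_zero_iff_lt]
        omega
      exact_mod_cast this
    exact (mul_eq_zero.mp hkey2).resolve_left hne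
  -- build the polynomial Q
  set Q : ℝ[X] := ∑ i' ∈ Finset.range (d + 1), Polynomial.C (c i') * descPochhammer ℝ i'
    with hQ
  have hQdeg : Q.natDegree ≤ d := by
    apply natDegree_sum_le_of_forall_le
    intro i' hi'
    calc (Polynomial.C (c i') * descPochhammer ℝ i').natDegree
        ≤ (Polynomial.C (c i')).natDegree + (descPochhammer ℝ i').natDegree :=
          natDegree_mul_le
      _ ≤ i' := by simp [descPochhammer_natDegree]
      _ ≤ d := by have := Finset.mem_range.mp hi'; omega
  have hQeval : ∀ z : Fin (d + 1), Q.eval (((n - r + (z : ℕ) : ℕ)) : ℝ) = 0 := by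
    intro z
    rw [hQ, eval_finset_sum]
    have : ∀ i' ∈ Finset.range (d + 1),
        (Polynomial.C (c i') * descPochhammer ℝ i').eval (((n - r + (z : ℕ) : ℕ)) : ℝ)
          = ((n - r + (z : ℕ)).descFactorial i' : ℝ) * c i' := by
      intro i' _
      rw [eval_mul, eval_C, descPochhammer_eval_eq_descFactorial]
      ring
    rw [Finset.sum_congr rfl this]
    exact hz (z : ℕ) (by omega)
  have hQ0 : Q = 0 := by
    apply eq_zero_of_natDegree_lt_card_of_eval_eq_zero Q
      (f := fun z : Fin (d + 1) => (((n - r + (z : ℕ) : ℕ)) : ℝ))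
    · intro z1 z2 h12
      have : (n - r + (z1 : ℕ)) = (n - r + (z2 : ℕ)) := Nat.cast_injective h12
      exact Fin.ext (by omega)
    · exact hQeval
    · simpa using Nat.lt_succ_of_le hQdeg
  have hci : c (i0 - j) = 0 :=
    aux_descPochhammer_indep d c hQ0 (i0 - j) (by omega)
  rw [hc] at hci
  simp only at hci
  have h1 : j + (i0 - j) = i0 := by omega
  rw [h1] at hci
  have h2 : i0 + s - j = t := by omega
  rwa [h2] at hci
end

section
/- Fix integers n, r, m, d with 0 ≤ m ≤ r ≤ n and −m ≤ d ≤ r − m, and set i = r − m, j = r − d − m, k = d + m. Define the operator L_{rmd}[f] := x^i · ( (n−j − xD)_k [ f^{(j)} ] ). Then: (1) L_{rmd} has order exactly r (when written as Σ_s a_s(x)·D^s, the coefficient a_r is a nonzero polynomial and a_s = 0 for s > r); (2) for every natural number l, L_{rmd}[x^l] is a real scalar multiple of x^{l+d} (so L_{rmd} has degree d); (3) L_{rmd}[f] has degree at most n − m for every f of degree at most n; and (4) there exists a polynomial f of degree at most n such that L_{rmd}[f] has degree exactly n − m. -/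
open Polynomial

/-- The operator `xD : p ↦ x·p'`. -/
noncomputable def xD : ℝ[X] →ₗ[ℝ] ℝ[X] :=
  (LinearMap.mulLeft ℝ (X : ℝ[X])).comp (Polynomial.derivative : ℝ[X] →ₗ[ℝ] ℝ[X])

/-- The Pochhammer operator `(a − xD)_k = (a − xD)∘((a−1) − xD)∘⋯∘((a−k+1) − xD)`,
the identity when `k = 0`. -/
noncomputable def pochOp (a : ℤ) : ℕ → (ℝ[X] →ₗ[ℝ] ℝ[X])
  | 0 => LinearMap.id
  | k + 1 => ((a : ℝ) • (LinearMap.id : ℝ[X] →ₗ[ℝ] ℝ[X]) - xD).comp (pochOp (a - 1) k)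

/-- Differentiation as an endomorphism of `ℝ[X]`. -/
noncomputable def Dlm : Module.End ℝ ℝ[X] := (Polynomial.derivative : ℝ[X] →ₗ[ℝ] ℝ[X])

/-- The operator `L_{rmd}[f] = x^i · (n−j−xD)_k [f^{(j)}]` with
`i = r−m`, `j = r−d−m`, `k = d+m`. -/
noncomputable def Lrmd (n r m : ℕ) (d : ℤ) : ℝ[X] →ₗ[ℝ] ℝ[X] :=
  (LinearMap.mulLeft ℝ ((X : ℝ[X]) ^ (r - m))).comp
    ((pochOp ((n : ℤ) - ((r : ℤ) - d - m).toNat) ((d + m).toNat)).comp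
      (Dlm ^ (((r : ℤ) - d - m).toNat)))

open Finset

lemma xD_apply (p : ℝ[X]) : xD p = X * derivative p := rfl

lemma xD_X_pow (p : ℕ) : xD (X ^ p : ℝ[X]) = (p : ℝ) • X ^ p := by
  cases p with
  | zero => simp [xD_apply]
  | succ q =>
      rw [xD_apply, derivative_X_pow, smul_eq_C_mul]
      push_cast
      ring

lemma pochOp_X_pow (k : ℕ) : ∀ (a : ℤ) (p : ℕ),
    pochOp a k (X ^ p : ℝ[X]) = (∏ t ∈ range k, ((a : ℝ) - t - p)) • X ^ p := by
  induction k with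
  | zero => intro a p; simp [pochOp]
  | succ k ih =>
      intro a p
      rw [pochOp, LinearMap.comp_apply, ih]
      rw [map_smul, LinearMap.sub_apply, LinearMap.smul_apply, LinearMap.id_apply, xD_X_pow,
        prod_range_succ']
      rw [smul_sub, smul_smul, smul_smul, ← sub_smul, ← mul_sub]
      have h2 : ((a : ℝ) - ((0:ℕ) : ℝ) - p) = (a : ℝ) - p := by push_cast; ring
      rw [h2]
      refine congrArg (fun u : ℝ => u • (X ^ p : ℝ[X])) (congrArg₂ (fun u v : ℝ => u * v) ?_ rfl)
      apply Finset.prod_congr rfl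
      intro x _
      push_cast
      ring

noncomputable def Bc : ℤ → ℕ → ℕ → ℝ
  | _, 0, 0 => 1
  | _, 0, _+1 => 0
  | a, k+1, 0 => (a : ℝ) * Bc (a-1) k 0
  | a, k+1, t+1 => ((a : ℝ) - (t+1)) * Bc (a-1) k (t+1) - Bc (a-1) k t

lemma Bc_zero_of_lt : ∀ (k t : ℕ) (a : ℤ), k < t → Bc a k t = 0 := by
  intro k
  induction k with
  | zero => intro t a ht; match t, ht with
            | s+1, _ => rfl
  | succ k ih =>
      intro t a ht
      match t, ht with
      | s+1, ht =>
        show ((a : ℝ) - (s+1)) * Bc (a-1) k (s+1) - Bc (a-1) k s = 0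
        rw [ih (s+1) _ (by omega), ih s _ (by omega)]
        ring

lemma Bc_self : ∀ (k : ℕ) (a : ℤ), Bc a k k = (-1) ^ k := by
  intro k
  induction k with
  | zero => intro a; rfl
  | succ k ih =>
      intro a
      show ((a : ℝ) - (k+1)) * Bc (a-1) k (k+1) - Bc (a-1) k k = (-1) ^ (k+1)
      rw [Bc_zero_of_lt k (k+1) _ (by omega), ih]
      ring

lemma xD_mul_X_pow (t : ℕ) (h : ℝ[X]) :
    xD (X ^ t * h) = (t : ℝ) • (X ^ t * h) + X ^ (t+1) * derivative h := by
  cases t with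
  | zero => simp [xD_apply]
  | succ q =>
      rw [xD_apply, derivative_mul, derivative_X_pow, smul_eq_C_mul]
      push_cast
      ring

lemma pochOp_expand (k : ℕ) : ∀ (a : ℤ) (g : ℝ[X]),
    pochOp a k g = ∑ t ∈ range (k+1), Bc a k t • (X ^ t * derivative^[t] g) := by
  induction k with
  | zero => intro a g; simp [pochOp, Bc]
  | succ k ih =>
      intro a g
      rw [pochOp, LinearMap.comp_apply, ih, LinearMap.sub_apply, LinearMap.smul_apply,
        LinearMap.id_apply]
      rw [map_sum, smul_sum]
      have hxd : ∀ t ∈ range (k+1), xD (Bc (a-1) k t • (X ^ t * derivative^[t] g))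
          = ((t : ℝ) * Bc (a-1) k t) • (X ^ t * derivative^[t] g)
            + Bc (a-1) k t • (X ^ (t+1) * derivative^[t+1] g) := by
        intro t _
        rw [map_smul, xD_mul_X_pow, smul_add, smul_smul, mul_comm, Function.iterate_succ_apply']
      rw [sum_congr rfl hxd, sum_add_distrib]
      -- LHS = ∑ (a•B t) e t - (∑ (t*B t) e t + ∑ B t e (t+1))
      -- target: ∑_{t ∈ range (k+2)} Bc a (k+1) t • e t
      set e : ℕ → ℝ[X] := fun t => X ^ t * derivative^[t] g with he
      have h1 : ∑ t ∈ range (k+1), ((a:ℝ) • Bc (a-1) k t • e t)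
          - (∑ t ∈ range (k+1), ((t : ℝ) * Bc (a-1) k t) • e t
            + ∑ t ∈ range (k+1), Bc (a-1) k t • e (t+1))
          = ∑ t ∈ range (k+1), (((a:ℝ) - t) * Bc (a-1) k t) • e t
            - ∑ t ∈ range (k+1), Bc (a-1) k t • e (t+1) := by
        rw [sub_add_eq_sub_sub, ← sum_sub_distrib]
        congr 1
        apply Finset.sum_congr rfl
        intro t _
        rw [smul_smul, ← sub_smul]
        ring_nf
      rw [h1]
      -- extend first sum to range (k+2)
      have h2 : ∑ t ∈ range (k+1), (((a:ℝ) - t) * Bc (a-1) k t) • e t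
          = ∑ t ∈ range (k+2), (((a:ℝ) - t) * Bc (a-1) k t) • e t := by
        rw [sum_range_succ (f := fun t => (((a:ℝ) - t) * Bc (a-1) k t) • e t) (k+1),
          Bc_zero_of_lt k (k+1) _ (by omega)]
        simp
      have h3 : ∑ t ∈ range (k+1), Bc (a-1) k t • e (t+1)
          = ∑ t ∈ range (k+2), (match t with | 0 => (0:ℝ) | s+1 => Bc (a-1) k s) • e t := by
        conv_rhs => rw [Finset.sum_range_succ']
        simp
      rw [h2, h3, ← sum_sub_distrib]
      apply Finset.sum_congr rfl
      intro t _
      rw [← sub_smul]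
      congr 1
      match t with
      | 0 => show _ = (a:ℝ) * Bc (a-1) k 0; push_cast; ring
      | s+1 => show _ = ((a : ℝ) - (s+1)) * Bc (a-1) k (s+1) - Bc (a-1) k s; push_cast; ring

lemma Dlm_pow_apply (j : ℕ) (f : ℝ[X]) : (Dlm ^ j) f = derivative^[j] f := by
  rw [Module.End.pow_apply]
  rfl

lemma Lrmd_apply (n r m : ℕ) (d : ℤ) (f : ℝ[X]) :
    Lrmd n r m d f = X ^ (r - m) *
      pochOp ((n : ℤ) - ((r : ℤ) - d - m).toNat) ((d + m).toNat)
        (derivative^[((r : ℤ) - d - m).toNat] f) := by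
  rw [Lrmd, LinearMap.comp_apply, LinearMap.comp_apply, Dlm_pow_apply]
  rfl

lemma Lrmd_X_pow (n r m : ℕ) (d : ℤ) (l : ℕ) :
    Lrmd n r m d (X ^ l) =
      ((l.descFactorial (((r : ℤ) - d - m).toNat) : ℝ) *
        ∏ t ∈ range ((d + m).toNat),
          ((((n : ℤ) - ((r : ℤ) - d - m).toNat : ℤ) : ℝ) - t
            - ((l - ((r : ℤ) - d - m).toNat : ℕ) : ℝ))) •
      X ^ ((r - m) + (l - ((r : ℤ) - d - m).toNat)) := by
  rw [Lrmd_apply, iterate_derivative_X_pow_eq_smul, map_smul, pochOp_X_pow,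
    smul_smul, mul_smul_comm, ← pow_add]

/-- For `0 ≤ m ≤ r ≤ n` and `−m ≤ d ≤ r−m`, the operator `L_{rmd}`
(1) has order exactly `r`; (2) has degree `d` (maps `x^l` to a multiple of `x^{l+d}`);
(3) maps `P_n` into `P_{n−m}`; and (4) attains degree `n−m` on some element of `P_n`. -/
theorem Lrmd_order_degree_deficiency (n r m : ℕ) (d : ℤ) (hmr : m ≤ r) (hrn : r ≤ n)
    (hd1 : -(m : ℤ) ≤ d) (hd2 : d ≤ (r : ℤ) - m) :
    (∃ a : ℕ → ℝ[X], (∀ f : ℝ[X], Lrmd n r m d f =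
        ∑ s ∈ Finset.range (r + 1), a s * derivative^[s] f) ∧ a r ≠ 0) ∧
    (∀ l : ℕ, ∃ c : ℝ, Lrmd n r m d (X ^ l) = c • X ^ ((l : ℤ) + d).toNat) ∧
    (∀ f ∈ degreeLE ℝ (n : WithBot ℕ),
      Lrmd n r m d f ∈ degreeLE ℝ ((n - m : ℕ) : WithBot ℕ)) ∧
    (∃ f ∈ degreeLE ℝ (n : WithBot ℕ),
      (Lrmd n r m d f).degree = ((n - m : ℕ) : WithBot ℕ)) := by
  set j : ℕ := ((r : ℤ) - d - m).toNat with hjdef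
  set k : ℕ := (d + m).toNat with hkdef
  have hj : (j : ℤ) = (r : ℤ) - d - m := Int.toNat_of_nonneg (by omega)
  have hk : (k : ℤ) = d + m := Int.toNat_of_nonneg (by omega)
  have hjk : j + k = r := by omega
  have hkn : k ≤ n := by omega
  have hjnk : j ≤ n - k := by omega
  refine ⟨?_, ?_, ?_, ?_⟩
  · -- Part 1: order exactly r
    refine ⟨fun s => if j ≤ s then Bc ((n : ℤ) - j) k (s - j) • (X : ℝ[X]) ^ ((r - m) + (s - j))
      else 0, ?_, ?_⟩
    · intro f
      rw [Lrmd_apply, pochOp_expand, mul_sum]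
      simp only [← hjdef, ← hkdef]
      conv_rhs => rw [show r + 1 = j + (k + 1) from by omega, sum_range_add]
      have hz : ∀ s ∈ range j,
          (if j ≤ s then Bc ((n : ℤ) - j) k (s - j) • (X : ℝ[X]) ^ ((r - m) + (s - j)) else 0)
            * derivative^[s] f = 0 := by
        intro s hs
        rw [mem_range] at hs
        rw [if_neg (by omega), zero_mul]
      rw [Finset.sum_eq_zero hz, zero_add]
      apply Finset.sum_congr rfl
      intro t _
      rw [if_pos (by omega), Nat.add_sub_cancel_left]
      rw [← Function.iterate_add_apply]
      rw [smul_mul_assoc, mul_smul_comm]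
      rw [← mul_assoc, ← pow_add, add_comm t j]
    · show (if j ≤ r then Bc ((n : ℤ) - j) k (r - j) • (X : ℝ[X]) ^ ((r - m) + (r - j))
        else 0) ≠ 0
      rw [if_pos (by omega : j ≤ r), show r - j = k by omega, Bc_self]
      apply smul_ne_zero
      · positivity
      · exact pow_ne_zero _ X_ne_zero
  · -- Part 2: degree d
    intro l
    rcases lt_or_ge l j with hl | hl
    · refine ⟨0, ?_⟩
      rw [Lrmd_X_pow, ← hjdef, ← hkdef, Nat.descFactorial_eq_zero_iff_lt.mpr hl]
      simp
    · refine ⟨(l.descFactorial j : ℝ) *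
        ∏ t ∈ range k, ((((n : ℤ) - j : ℤ) : ℝ) - t - ((l - j : ℕ) : ℝ)), ?_⟩
      rw [Lrmd_X_pow, ← hjdef, ← hkdef,
        show (r - m) + (l - j) = ((l : ℤ) + d).toNat from by omega]
  · -- Part 3: maps P_n to P_{n-m}
    have key : ∀ l ≤ n, (Lrmd n r m d (X ^ l)).degree ≤ ((n - m : ℕ) : WithBot ℕ) := by
      intro l hln
      rw [Lrmd_X_pow, ← hjdef, ← hkdef]
      rcases le_or_gt (l + k) n with hc | hc
      · refine (degree_smul_le _ _).trans ?_
        rw [degree_X_pow]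
        exact_mod_cast (by omega : (r - m) + (l - j) ≤ n - m)
      · have hjl : j ≤ l := by omega
        have hprod : (∏ t ∈ range k,
            ((((n : ℤ) - j : ℤ) : ℝ) - t - ((l - j : ℕ) : ℝ))) = 0 := by
          apply Finset.prod_eq_zero (i := n - l) (mem_range.mpr (by omega))
          have h1 : ((n - l : ℕ) : ℝ) = (n : ℝ) - l := by
            push_cast [Nat.cast_sub hln]; ring
          have h2 : ((l - j : ℕ) : ℝ) = (l : ℝ) - j := by
            push_cast [Nat.cast_sub hjl]; ring
          rw [h1, h2]
          push_cast
          ring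
        rw [hprod, mul_zero, zero_smul, degree_zero]
        exact bot_le
    intro f hf
    rw [mem_degreeLE] at hf ⊢
    have hnd : f.natDegree < n + 1 := Nat.lt_succ_of_le (natDegree_le_iff_degree_le.mpr hf)
    conv_lhs => rw [f.as_sum_range' (n + 1) hnd]
    rw [map_sum]
    refine (degree_sum_le _ _).trans (Finset.sup_le ?_)
    intro l hl
    rw [mem_range] at hl
    rw [← smul_X_eq_monomial, map_smul]
    exact (degree_smul_le _ _).trans (key l (by omega))
  · -- Part 4: attains degree n - m
    refine ⟨X ^ (n - k), ?_, ?_⟩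
    · rw [mem_degreeLE, degree_X_pow]
      exact_mod_cast (by omega : n - k ≤ n)
    · rw [Lrmd_X_pow, ← hjdef, ← hkdef]
      have hcast : ((n - k - j : ℕ) : ℝ) = (n : ℝ) - k - j := by
        have h1 : ((n - k : ℕ) : ℝ) = (n : ℝ) - k := by push_cast [Nat.cast_sub hkn]; ring
        have h2 : ((n - k - j : ℕ) : ℝ) = ((n - k : ℕ) : ℝ) - j := by
          push_cast [Nat.cast_sub hjnk]; ring
        rw [h2, h1]
      have hs : ((n - k).descFactorial j : ℝ) *
          (∏ t ∈ range k, ((((n : ℤ) - j : ℤ) : ℝ) - t - ((n - k - j : ℕ) : ℝ))) ≠ 0 := by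
        apply mul_ne_zero
        · exact_mod_cast fun h => absurd (Nat.descFactorial_eq_zero_iff_lt.mp
            (by exact_mod_cast h)) (by omega)
        · apply Finset.prod_ne_zero_iff.mpr
          intro t ht
          rw [mem_range] at ht
          rw [hcast]
          push_cast
          have : (t : ℝ) < (k : ℝ) := by exact_mod_cast ht
          intro habs
          nlinarith [habs]
      rw [smul_eq_C_mul, degree_C_mul_X_pow _ (by exact_mod_cast hs)]
      congr 1
      omega
end

section
/- For all natural numbers j ≤ r ≤ n, the operator identity (n−j − xD)_{r−j} ∘ D^j = D^j ∘ (n − xD)_{r−j} holds, i.e. for every polynomial f ∈ ℝ[x] one has (n−j − xD)_{r−j}[ f^{(j)} ] = ( (n − xD)_{r−j}[ f ] )^{(j)}. -/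
open Polynomial

lemma deriv_poch (a : ℤ) (k : ℕ) : ∀ f : ℝ[X],
    pochOp (a - 1) k (derivative f) = derivative (pochOp a k f) := by
  induction k generalizing a with
  | zero => intro f; simp [pochOp]
  | succ k ih =>
    intro f
    simp only [pochOp, LinearMap.comp_apply]
    rw [show a - 1 - 1 = (a - 1) - 1 from rfl, ih (a - 1) f]
    set g := pochOp (a - 1) k f
    simp only [LinearMap.sub_apply, LinearMap.smul_apply, LinearMap.id_apply, xD,
      LinearMap.comp_apply, LinearMap.mulLeft_apply, map_sub, map_smul,
      Polynomial.derivative_mul, Polynomial.derivative_X]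
    push_cast [sub_smul, one_smul, one_mul]
    abel

lemma deriv_iter_poch (a : ℤ) (k j : ℕ) (f : ℝ[X]) :
    pochOp (a - j) k (derivative^[j] f) = derivative^[j] (pochOp a k f) := by
  induction j with
  | zero => simp
  | succ j ih =>
    rw [Function.iterate_succ_apply', Function.iterate_succ_apply',
      show (a : ℤ) - (j + 1 : ℕ) = (a - j) - 1 by push_cast; ring,
      deriv_poch, ih]

/-- For `j ≤ r ≤ n`, the operator identity
`(n−j − xD)_{r−j} ∘ D^j = D^j ∘ (n − xD)_{r−j}` holds on `ℝ[x]`. -/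
theorem pochOp_comm_derivative (n r j : ℕ) (hj : j ≤ r) (hr : r ≤ n) (f : ℝ[X]) :
    pochOp ((n : ℤ) - j) (r - j) (derivative^[j] f) =
      derivative^[j] (pochOp (n : ℤ) (r - j) f) := by
  exact deriv_iter_poch n (r - j) j f
end

section
/- Fix natural numbers r ≤ n. Then K_{rr} = D^r, and for every 0 ≤ j ≤ r − 1 the commutator relation [D, K_{rj}] = −K_{r,j+1} holds; that is, for every polynomial f ∈ ℝ[x], D[ K_{rj}[f] ] − K_{rj}[ D[f] ] = −K_{r,j+1}[f]. -/
open Polynomial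

/-- The maximal deficiency operator `K_{rj} = (1/(r−j)!)·(n−j−xD)_{r−j} ∘ D^j`. -/
noncomputable def Kop (n r j : ℕ) : ℝ[X] →ₗ[ℝ] ℝ[X] :=
  (((r - j).factorial : ℝ))⁻¹ • ((pochOp ((n : ℤ) - j) (r - j)).comp (Dlm ^ j))

lemma key (c : ℝ) :
    Dlm.comp (c • (LinearMap.id : ℝ[X] →ₗ[ℝ] ℝ[X]) - xD)
      = ((c - 1) • (LinearMap.id : ℝ[X] →ₗ[ℝ] ℝ[X]) - xD).comp Dlm := by
  apply LinearMap.ext; intro f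
  simp only [Dlm, xD, LinearMap.comp_apply, LinearMap.sub_apply, LinearMap.smul_apply,
    LinearMap.id_apply, LinearMap.coe_comp, Function.comp_apply, LinearMap.mulLeft_apply,
    derivative_sub, derivative_smul, derivative_mul, derivative_X, one_mul, derivative_C,
    zero_mul, zero_add, Polynomial.smul_eq_C_mul, C_sub, C_1]
  ring

lemma xDkey (c : ℝ) :
    xD.comp (c • (LinearMap.id : ℝ[X] →ₗ[ℝ] ℝ[X]) - xD)
      = (c • (LinearMap.id : ℝ[X] →ₗ[ℝ] ℝ[X]) - xD).comp xD := by
  apply LinearMap.ext; intro f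
  simp only [xD, LinearMap.comp_apply, LinearMap.sub_apply, LinearMap.smul_apply,
    LinearMap.id_apply, LinearMap.coe_comp, Function.comp_apply, LinearMap.mulLeft_apply,
    derivative_sub, derivative_smul, derivative_mul, derivative_X, one_mul, derivative_C,
    zero_mul, mul_zero, zero_add, Polynomial.smul_eq_C_mul, C_sub, C_1]
  ring

lemma xD_comm (a : ℤ) (k : ℕ) : xD.comp (pochOp a k) = (pochOp a k).comp xD := by
  induction k generalizing a with
  | zero => simp [pochOp]
  | succ k ih =>
    calc xD.comp (pochOp a (k+1))
        = (xD.comp ((a : ℝ) • LinearMap.id - xD)).comp (pochOp (a-1) k) := by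
          simp [pochOp, LinearMap.comp_assoc]
      _ = ((a : ℝ) • LinearMap.id - xD).comp (xD.comp (pochOp (a-1) k)) := by
          rw [xDkey, LinearMap.comp_assoc]
      _ = (pochOp a (k+1)).comp xD := by
          rw [ih, pochOp, LinearMap.comp_assoc]

-- right factor form
lemma poch_right (a : ℤ) (k : ℕ) :
    pochOp a (k+1) = (pochOp a k).comp
      ((((a : ℝ) - k) • (LinearMap.id : ℝ[X] →ₗ[ℝ] ℝ[X]) - xD)) := by
  induction k generalizing a with
  | zero => simp [pochOp]
  | succ k ih =>
    have : pochOp a (k+2) = ((a : ℝ) • LinearMap.id - xD).comp (pochOp (a-1) (k+1)) := rfl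
    rw [this, ih (a-1)]
    rw [← LinearMap.comp_assoc]
    have : pochOp a (k+1) = ((a : ℝ) • LinearMap.id - xD).comp (pochOp (a-1) k) := rfl
    rw [← this]
    congr 2
    push_cast
    ring

lemma D_comm (a : ℤ) (k : ℕ) :
    Dlm.comp (pochOp a k) = (pochOp (a-1) k).comp Dlm := by
  induction k generalizing a with
  | zero => simp [pochOp]
  | succ k ih =>
    calc Dlm.comp (pochOp a (k+1))
        = (Dlm.comp ((a : ℝ) • LinearMap.id - xD)).comp (pochOp (a-1) k) := by
          simp [pochOp, LinearMap.comp_assoc]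
      _ = (((a : ℝ) - 1) • LinearMap.id - xD).comp (Dlm.comp (pochOp (a-1) k)) := by
          rw [key, LinearMap.comp_assoc]
      _ = (pochOp (a-1) (k+1)).comp Dlm := by
          have hc : ((a : ℝ) - 1) = (((a - 1 : ℤ)) : ℝ) := by push_cast; ring
          rw [ih, ← LinearMap.comp_assoc, hc]
          rfl

lemma poch_shift (a : ℤ) (k : ℕ) :
    pochOp (a-1) (k+1) = pochOp a (k+1) - ((k : ℝ) + 1) • pochOp (a-1) k := by
  rw [poch_right (a-1) k]
  have h1 : pochOp a (k+1) = ((a : ℝ) • LinearMap.id - xD).comp (pochOp (a-1) k) := rfl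
  have h2 : ((a : ℝ) • (LinearMap.id : ℝ[X] →ₗ[ℝ] ℝ[X]) - xD).comp (pochOp (a-1) k)
      = (pochOp (a-1) k).comp ((a : ℝ) • LinearMap.id - xD) := by
    apply LinearMap.ext; intro f
    simp only [LinearMap.comp_apply, LinearMap.sub_apply, LinearMap.smul_apply,
      LinearMap.id_apply, map_sub, map_smul]
    have := LinearMap.congr_fun (xD_comm (a-1) k) f
    simp only [LinearMap.coe_comp, Function.comp_apply] at this
    rw [this]
  rw [h1, h2]
  apply LinearMap.ext; intro f
  simp only [LinearMap.comp_apply, LinearMap.sub_apply, LinearMap.smul_apply,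
    LinearMap.id_apply, map_sub, map_smul]
  push_cast
  module

/-- For `r ≤ n`: `K_{rr} = D^r` and for `0 ≤ j ≤ r−1` the commutator
relation `[D, K_{rj}] = −K_{r,j+1}` holds, i.e.
`D[K_{rj}[f]] − K_{rj}[D[f]] = −K_{r,j+1}[f]` for every `f ∈ ℝ[x]`. -/
theorem Kop_recursion (n r : ℕ) (hrn : r ≤ n) :
    (∀ f : ℝ[X], Kop n r r f = derivative^[r] f) ∧
    (∀ j : ℕ, j + 1 ≤ r → ∀ f : ℝ[X],
      derivative (Kop n r j f) - Kop n r j (derivative f) = -(Kop n r (j + 1) f)) := by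
  constructor
  · intro f
    simp only [Kop, Nat.sub_self, Nat.factorial_zero, Nat.cast_one, inv_one, one_smul,
      pochOp, LinearMap.id_comp]
    rw [Module.End.pow_apply]
    rfl
  · intro j hj f
    obtain ⟨k, hk⟩ : ∃ k, r - j = k + 1 := ⟨r - (j+1), by omega⟩
    have hk2 : r - (j+1) = k := by omega
    have hc : (n:ℤ) - j - 1 = (n:ℤ) - (j+1) := by push_cast; ring
    have hD : Dlm.comp (pochOp ((n:ℤ) - j) (k+1)) = (pochOp ((n:ℤ) - (j+1)) (k+1)).comp Dlm := by
      have := D_comm ((n:ℤ) - j) (k+1); rwa [hc] at this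
    have hshift : pochOp ((n:ℤ) - (j+1)) (k+1)
        = pochOp ((n:ℤ) - j) (k+1) - ((k:ℝ)+1) • pochOp ((n:ℤ) - (j+1)) k := by
      have := poch_shift ((n:ℤ) - j) k; rwa [hc] at this
    simp only [Kop, hk, hk2, LinearMap.smul_apply, LinearMap.comp_apply]
    have e1 : derivative ((pochOp ((n:ℤ)-j) (k+1)) ((Dlm^j) f))
        = (pochOp ((n:ℤ)-(j+1)) (k+1)) ((Dlm^(j+1)) f) := by
      have h := LinearMap.congr_fun hD ((Dlm^j) f)
      simp only [LinearMap.comp_apply] at h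
      rw [show derivative ((pochOp ((n:ℤ)-j) (k+1)) ((Dlm^j) f))
          = Dlm ((pochOp ((n:ℤ)-j) (k+1)) ((Dlm^j) f)) from rfl, h]
      congr 1
      rw [pow_succ']
      rfl
    have e2 : (Dlm^j) (derivative f) = (Dlm^(j+1)) f := by
      rw [pow_succ]; rfl
    have e3 := LinearMap.congr_fun hshift ((Dlm^(j+1)) f)
    simp only [LinearMap.sub_apply, LinearMap.smul_apply] at e3
    rw [derivative_smul, e1, e2, e3, smul_sub]
    have hfac : ((k+1).factorial : ℝ)⁻¹ • (((k:ℝ)+1) • (pochOp ((n:ℤ)-(j+1)) k) ((Dlm^(j+1)) f))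
        = ((k.factorial : ℝ))⁻¹ • (pochOp ((n:ℤ)-(j+1)) k) ((Dlm^(j+1)) f) := by
      rw [smul_smul]
      congr 1
      rw [Nat.factorial_succ]
      push_cast
      rw [mul_inv]
      field_simp
    rw [hfac]
    abel
end
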